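/- arXiv:1510.00717 — 2 statements merged into one kernel-verified Lean document; each statement's English description precedes it below -/
import Mathlib

section
/- Under the hypotheses of the previous statement (level sets of x ↦ ∂s/∂y(x,y) independent of y), the surplus is of pseudo-index form: there exist functions I : X → ℝ and σ : I(X) × (a,b) → ℝ such that s(x,y) = σ(I(x), y) + s(x, (a+b)/2) for all (x,y), with I(x) = ∂s/∂y(x, (a+b)/2). -/
open Set

/-- If the level sets of `x ↦ s_y(x,y)` are independent of `y`, then `s` is
of pseudo-index form: with `I(x) := s_y(x,(a+b)/2)` there exists
`σ : ℝ → ℝ → ℝ` such that `s(x,y) = σ(I(x),y) + s(x,(a+b)/2)`. -/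
theorem pseudo_index_form_of_level_sets_independent
    (m : ℕ) (X : Set (EuclideanSpace ℝ (Fin m)))
    (a b : ℝ) (hab : a < b)
    (s sy : EuclideanSpace ℝ (Fin m) → ℝ → ℝ)
    (hderiv : ∀ x ∈ X, ∀ y ∈ Ioo a b, HasDerivAt (s x) (sy x y) y)
    (hsycont : ∀ x ∈ X, ContinuousOn (sy x) (Ioo a b))
    (hindep : ∀ x ∈ X, ∀ x' ∈ X, sy x ((a + b) / 2) = sy x' ((a + b) / 2) →
      ∀ y ∈ Ioo a b, sy x y = sy x' y) :
    ∃ σ : ℝ → ℝ → ℝ, ∀ x ∈ X, ∀ y ∈ Ioo a b,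
      s x y = σ (sy x ((a + b) / 2)) y + s x ((a + b) / 2) := by
  classical
  set c := (a + b) / 2 with hc
  have hcmem : c ∈ Ioo a b := ⟨by simp [hc]; linarith, by simp [hc]; linarith⟩
  -- key: same level value implies same surplus increment
  have key : ∀ x ∈ X, ∀ x' ∈ X, sy x c = sy x' c →
      ∀ y ∈ Ioo a b, s x y - s x c = s x' y - s x' c := by
    intro x hx x' hx' hlev y hy
    have heq : ∀ z ∈ Ioo a b, sy x z = sy x' z := hindep x hx x' hx' hlev
    set f : ℝ → ℝ := fun z => s x z - s x' z with hf
    have hderiv0 : ∀ z ∈ Ioo a b, HasDerivAt f 0 z := by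
      intro z hz
      have h1 := hderiv x hx z hz
      have h2 := hderiv x' hx' z hz
      have := h1.sub h2
      rwa [heq z hz, sub_self] at this
    have hconst : f y = f c := by
      apply (convex_Ioo a b).is_const_of_fderivWithin_eq_zero
        (f := f) (𝕜 := ℝ)
      · intro z hz
        exact ((hderiv0 z hz).differentiableAt).differentiableWithinAt
      · intro z hz
        rw [fderivWithin_of_isOpen isOpen_Ioo hz]
        rw [((hderiv0 z hz).hasFDerivAt).fderiv]
        ext t
        simp
      · exact hy
      · exact hcmem
    simp only [hf] at hconst
    linarith
  refine ⟨fun i y => if h : ∃ x ∈ X, sy x c = i then s h.choose y - s h.choose c else 0,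
    fun x hx y hy => ?_⟩
  have hex : ∃ x' ∈ X, sy x' c = sy x c := ⟨x, hx, rfl⟩
  simp only [dif_pos hex]
  obtain ⟨hx0, hlev⟩ := hex.choose_spec
  have := key x hx hex.choose hx0 hlev.symm y hy
  linarith
end

section
/- Let u : ℝᵐ → ℝ be convex with u(z) ≥ u(x) + y·(z - x) for all z whenever (x,y) ∈ S, where S is the support of a coupling γ of probability measures μ and ν on ℝᵐ with finite second moments. Then γ maximizes ∫ x·y dγ'(x,y) over all couplings γ' of μ and ν. -/
open MeasureTheory Set
open scoped RealInnerProductSpace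

/-!
The Legendre transform `v = u*` is lower semicontinuous, hence measurable, and satisfies
`⟪x, y⟫ ≤ u x + v y` everywhere (Fenchel–Young), with equality when `y` is a subgradient of `u`
at `x`, so `γ`-almost everywhere. Integrating this against any coupling `γ'` and using that the
right-hand side only sees the marginals gives
`∫ ⟪x, y⟫ dγ' ≤ ∫ u dμ + ∫ v dν = ∫ ⟪x, y⟫ dγ`.
The second moments make `⟪x, y⟫` integrable for every coupling; on the support of `γ`,
`u` lies between an affine function and `u 0 + ⟪x, y⟫`, which makes `u` and then `v` integrable.
-/

section Coupling

variable {X Y F : Type*} [MeasurableSpace X] [MeasurableSpace Y] [NormedAddCommGroup F]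
  {μ : Measure X} {ν : Measure Y} {γ γ' : Measure (X × Y)}

structure IsCoupling (γ : Measure (X × Y)) (μ : Measure X) (ν : Measure Y) : Prop where
  map_fst : γ.map Prod.fst = μ
  map_snd : γ.map Prod.snd = ν

namespace IsCoupling

theorem isProbabilityMeasure (hγ : IsCoupling γ μ ν) [hμ : IsProbabilityMeasure μ] :
    IsProbabilityMeasure γ := by
  rw [← hγ.map_fst] at hμ
  exact Measure.isProbabilityMeasure_of_map Prod.fst

theorem memLp_comp_fst (hγ : IsCoupling γ μ ν) {f : X → F} {p : ENNReal} (hf : MemLp f p μ) :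
    MemLp (fun q => f q.1) p γ := by
  rw [← hγ.map_fst] at hf
  exact hf.comp_of_map measurable_fst.aemeasurable

theorem memLp_comp_snd (hγ : IsCoupling γ μ ν) {g : Y → F} {p : ENNReal} (hg : MemLp g p ν) :
    MemLp (fun q => g q.2) p γ := by
  rw [← hγ.map_snd] at hg
  exact hg.comp_of_map measurable_snd.aemeasurable

theorem integrable_comp_fst (hγ : IsCoupling γ μ ν) {f : X → F} (hf : Integrable f μ) :
    Integrable (fun p => f p.1) γ :=
  memLp_one_iff_integrable.1 (hγ.memLp_comp_fst (memLp_one_iff_integrable.2 hf))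

theorem integrable_comp_snd (hγ : IsCoupling γ μ ν) {g : Y → F} (hg : Integrable g ν) :
    Integrable (fun p => g p.2) γ :=
  memLp_one_iff_integrable.1 (hγ.memLp_comp_snd (memLp_one_iff_integrable.2 hg))

theorem integrable_of_comp_fst (hγ : IsCoupling γ μ ν) {f : X → F}
    (hf : AEStronglyMeasurable f μ) (hfγ : Integrable (fun p => f p.1) γ) : Integrable f μ := by
  rw [← hγ.map_fst] at hf ⊢
  exact (integrable_map_measure hf measurable_fst.aemeasurable).2 hfγ

theorem integrable_of_comp_snd (hγ : IsCoupling γ μ ν) {g : Y → F}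
    (hg : AEStronglyMeasurable g ν) (hgγ : Integrable (fun p => g p.2) γ) : Integrable g ν := by
  rw [← hγ.map_snd] at hg ⊢
  exact (integrable_map_measure hg measurable_snd.aemeasurable).2 hgγ

theorem integral_comp_fst (hγ : IsCoupling γ μ ν) {f : X → ℝ} (hf : AEStronglyMeasurable f μ) :
    ∫ p, f p.1 ∂γ = ∫ x, f x ∂μ := by
  rw [← hγ.map_fst] at hf ⊢
  exact (integral_map measurable_fst.aemeasurable hf).symm

theorem integral_comp_snd (hγ : IsCoupling γ μ ν) {g : Y → ℝ} (hg : AEStronglyMeasurable g ν) :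
    ∫ p, g p.2 ∂γ = ∫ y, g y ∂ν := by
  rw [← hγ.map_snd] at hg ⊢
  exact (integral_map measurable_snd.aemeasurable hg).symm

theorem ae_comp_snd (hγ : IsCoupling γ μ ν) {P : Y → Prop} (hP : ∀ᵐ y ∂ν, P y) :
    ∀ᵐ p ∂γ, P p.2 := by
  rw [← hγ.map_snd] at hP
  exact ae_of_ae_map measurable_snd.aemeasurable hP

theorem ae_of_ae_comp_snd (hγ : IsCoupling γ μ ν) {P : Y → Prop} (hP : MeasurableSet {y | P y})
    (hPγ : ∀ᵐ p ∂γ, P p.2) : ∀ᵐ y ∂ν, P y := by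
  rw [← hγ.map_snd]
  exact (ae_map_iff measurable_snd.aemeasurable hP).2 hPγ

theorem integral_le_of_le_add (hγ : IsCoupling γ μ ν) (hγ' : IsCoupling γ' μ ν)
    {c : X × Y → ℝ} {f : X → ℝ} {g : Y → ℝ} (hf : Integrable f μ) (hg : Integrable g ν)
    (hc : Integrable c γ') (hle : ∀ᵐ p ∂γ', c p ≤ f p.1 + g p.2)
    (heq : ∀ᵐ p ∂γ, c p = f p.1 + g p.2) :
    ∫ p, c p ∂γ' ≤ ∫ p, c p ∂γ :=
  calc ∫ p, c p ∂γ' ≤ ∫ p, (f p.1 + g p.2) ∂γ' :=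
        integral_mono_ae hc ((hγ'.integrable_comp_fst hf).add (hγ'.integrable_comp_snd hg)) hle
    _ = ∫ x, f x ∂μ + ∫ y, g y ∂ν := by
        rw [integral_add (hγ'.integrable_comp_fst hf) (hγ'.integrable_comp_snd hg),
          hγ'.integral_comp_fst hf.1, hγ'.integral_comp_snd hg.1]
    _ = ∫ p, (f p.1 + g p.2) ∂γ := by
        rw [integral_add (hγ.integrable_comp_fst hf) (hγ.integrable_comp_snd hg),
          hγ.integral_comp_fst hf.1, hγ.integral_comp_snd hg.1]
    _ = ∫ p, c p ∂γ := integral_congr_ae (heq.mono fun _ hp => hp.symm)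

end IsCoupling

end Coupling

section Legendre

variable {E : Type*} [NormedAddCommGroup E] [InnerProductSpace ℝ E]

def IsSubgradient (u : E → ℝ) (x y : E) : Prop := ∀ z, u x + ⟪y, z - x⟫ ≤ u z

/-- It is `⊤` where the supremum is unbounded, and `toReal` turns that into the junk value `0`. -/
noncomputable def legendre (u : E → ℝ) (y : E) : EReal := ⨆ x, ((⟪x, y⟫ - u x : ℝ) : EReal)

variable {u : E → ℝ}

theorem inner_sub_le_legendre (x y : E) : ((⟪x, y⟫ - u x : ℝ) : EReal) ≤ legendre u y :=
  le_iSup (fun x => ((⟪x, y⟫ - u x : ℝ) : EReal)) x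

theorem legendre_ne_bot (y : E) : legendre u y ≠ ⊥ :=
  ne_bot_of_le_ne_bot (EReal.coe_ne_bot _) (inner_sub_le_legendre 0 y)

theorem inner_le_add_toReal_legendre {y : E} (hy : legendre u y ≠ ⊤) (x : E) :
    ⟪x, y⟫ ≤ u x + (legendre u y).toReal := by
  have h := inner_sub_le_legendre (u := u) x y
  rw [← EReal.coe_toReal hy (legendre_ne_bot y), EReal.coe_le_coe_iff] at h
  linarith

theorem lowerSemicontinuous_legendre : LowerSemicontinuous (legendre u) :=
  lowerSemicontinuous_iSup fun _ =>
    (continuous_coe_real_ereal.comp ((continuous_const.inner continuous_id).sub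
      continuous_const)).lowerSemicontinuous

theorem measurable_legendre [MeasurableSpace E] [OpensMeasurableSpace E] :
    Measurable (legendre u) :=
  lowerSemicontinuous_legendre.measurable

theorem IsSubgradient.le_add_inner {x y : E} (h : IsSubgradient u x y) (z : E) :
    u x ≤ u z + ⟪x - z, y⟫ := by
  have := h z
  rw [← neg_sub, inner_neg_right, real_inner_comm] at this
  linarith

theorem IsSubgradient.legendre_eq {x y : E} (h : IsSubgradient u x y) :
    legendre u y = ((⟪x, y⟫ - u x : ℝ) : EReal) := by
  refine le_antisymm (iSup_le fun z => EReal.coe_le_coe_iff.2 ?_) (inner_sub_le_legendre x y)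
  have := h.le_add_inner z
  rw [inner_sub_left] at this
  linarith

end Legendre

namespace IsCoupling

variable {E : Type*} [NormedAddCommGroup E] [InnerProductSpace ℝ E] [MeasurableSpace E]
  {μ ν : Measure E} {γ : Measure (E × E)} {u : E → ℝ}

theorem integrable_inner (hγ : IsCoupling γ μ ν) (hμ : MemLp (fun x => x) 2 μ)
    (hν : MemLp (fun y => y) 2 ν) : Integrable (fun p => ⟪p.1, p.2⟫) γ :=
  memLp_one_iff_integrable.1
    ((innerSL ℝ).memLp_of_bilin 1 (hγ.memLp_comp_fst hμ) (hγ.memLp_comp_snd hν))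

/-- `u` is squeezed between the affine minorant given by one subgradient and
`u 0 + ⟪x, y⟫` on the support of `γ`. -/
theorem integrable_comp_fst_of_isSubgradient [IsProbabilityMeasure μ] (hγ : IsCoupling γ μ ν)
    (hμ : MemLp (fun x => x) 2 μ) (hν : MemLp (fun y => y) 2 ν) (hu : Measurable u)
    (hS : ∀ᵐ p ∂γ, IsSubgradient u p.1 p.2) : Integrable (fun p => u p.1) γ := by
  have := hγ.isProbabilityMeasure
  obtain ⟨p₀, hp₀⟩ := hS.exists
  have h_fst : Integrable (fun p : E × E => p.1) γ :=
    hγ.integrable_comp_fst (hμ.integrable one_le_two)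
  refine integrable_of_le_of_le (hu.comp measurable_fst).aestronglyMeasurable
    (g₁ := fun p => u p₀.1 + ⟪p₀.2, p.1 - p₀.1⟫) (g₂ := fun p => u 0 + ⟪p.1, p.2⟫)
    (ae_of_all _ fun p => hp₀ p.1) (hS.mono fun p hp => by simpa using hp.le_add_inner 0)
    ((integrable_const _).add ((h_fst.sub (integrable_const _)).const_inner _))
    ((integrable_const _).add (hγ.integrable_inner hμ hν))

theorem ae_legendre_ne_top [OpensMeasurableSpace E] (hγ : IsCoupling γ μ ν)
    (hS : ∀ᵐ p ∂γ, IsSubgradient u p.1 p.2) : ∀ᵐ y ∂ν, legendre u y ≠ ⊤ :=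
  hγ.ae_of_ae_comp_snd (measurable_legendre (measurableSet_singleton ⊤).compl)
    (hS.mono fun _ hp => hp.legendre_eq ▸ EReal.coe_ne_top _)

theorem integrable_toReal_legendre [IsProbabilityMeasure μ] [OpensMeasurableSpace E]
    (hγ : IsCoupling γ μ ν) (hμ : MemLp (fun x => x) 2 μ) (hν : MemLp (fun y => y) 2 ν)
    (hu : Measurable u) (hS : ∀ᵐ p ∂γ, IsSubgradient u p.1 p.2) :
    Integrable (fun y => (legendre u y).toReal) ν := by
  refine hγ.integrable_of_comp_snd measurable_legendre.ereal_toReal.aestronglyMeasurable ?_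
  refine ((hγ.integrable_inner hμ hν).sub
    (hγ.integrable_comp_fst_of_isSubgradient hμ hν hu hS)).congr ?_
  filter_upwards [hS] with p hp
  simp only [Pi.sub_apply, hp.legendre_eq, EReal.toReal_coe]

end IsCoupling

theorem optimality_of_subdifferential_coupling_general
    (m : ℕ) (u : EuclideanSpace ℝ (Fin m) → ℝ)
    (hu : ConvexOn ℝ Set.univ u)
    (μ ν : Measure (EuclideanSpace ℝ (Fin m)))
    [IsProbabilityMeasure μ]
    (hμ2 : MemLp (fun x => x) 2 μ) (hν2 : MemLp (fun y => y) 2 ν)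
    (γ : Measure (EuclideanSpace ℝ (Fin m) × EuclideanSpace ℝ (Fin m)))
    (hγ1 : γ.map Prod.fst = μ) (hγ2 : γ.map Prod.snd = ν)
    (S : Set (EuclideanSpace ℝ (Fin m) × EuclideanSpace ℝ (Fin m)))
    (hconc : γ Sᶜ = 0)
    (hsub : ∀ p ∈ S, ∀ z : EuclideanSpace ℝ (Fin m),
      u p.1 + ⟪p.2, z - p.1⟫ ≤ u z) :
    ∀ γ' : Measure (EuclideanSpace ℝ (Fin m) × EuclideanSpace ℝ (Fin m)),
      γ'.map Prod.fst = μ → γ'.map Prod.snd = ν →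
      ∫ p, ⟪p.1, p.2⟫ ∂γ' ≤ ∫ p, ⟪p.1, p.2⟫ ∂γ := by
  intro γ' hγ'1 hγ'2
  have hγ : IsCoupling γ μ ν := ⟨hγ1, hγ2⟩
  have hγ' : IsCoupling γ' μ ν := ⟨hγ'1, hγ'2⟩
  have hS : ∀ᵐ p ∂γ, IsSubgradient u p.1 p.2 := (ae_iff.2 hconc).mono hsub
  have hu_meas : Measurable u := (continuousOn_univ.1 (hu.continuousOn isOpen_univ)).measurable
  have hu_int : Integrable u μ := hγ.integrable_of_comp_fst hu_meas.aestronglyMeasurable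
    (hγ.integrable_comp_fst_of_isSubgradient hμ2 hν2 hu_meas hS)
  refine hγ.integral_le_of_le_add hγ' hu_int
    (hγ.integrable_toReal_legendre hμ2 hν2 hu_meas hS) (hγ'.integrable_inner hμ2 hν2) ?_ ?_
  · filter_upwards [hγ'.ae_comp_snd (hγ.ae_legendre_ne_top hS)] with p hp
    exact inner_le_add_toReal_legendre hp p.1
  · filter_upwards [hS] with p hp
    rw [hp.legendre_eq, EReal.toReal_coe]
    ring

/-- If a coupling `γ` of `(μ, ν)` (probability measures on `ℝᵐ` with finite
second moments) is concentrated on a set `S` contained in the subdifferential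
of a convex function `u`, then `γ` maximizes `∫ x·y dγ'` over all couplings
`γ'` of `(μ, ν)`. -/
theorem optimality_of_subdifferential_coupling
    (m : ℕ) (u : EuclideanSpace ℝ (Fin m) → ℝ)
    (hu : ConvexOn ℝ Set.univ u)
    (μ ν : Measure (EuclideanSpace ℝ (Fin m)))
    [IsProbabilityMeasure μ] [IsProbabilityMeasure ν]
    (hμ2 : MemLp (fun x => x) 2 μ) (hν2 : MemLp (fun y => y) 2 ν)
    (γ : Measure (EuclideanSpace ℝ (Fin m) × EuclideanSpace ℝ (Fin m)))
    (hγ1 : γ.map Prod.fst = μ) (hγ2 : γ.map Prod.snd = ν)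
    (S : Set (EuclideanSpace ℝ (Fin m) × EuclideanSpace ℝ (Fin m)))
    (hconc : γ Sᶜ = 0)
    (hsub : ∀ p ∈ S, ∀ z : EuclideanSpace ℝ (Fin m),
      u p.1 + ⟪p.2, z - p.1⟫ ≤ u z) :
    ∀ γ' : Measure (EuclideanSpace ℝ (Fin m) × EuclideanSpace ℝ (Fin m)),
      γ'.map Prod.fst = μ → γ'.map Prod.snd = ν →
      ∫ p, ⟪p.1, p.2⟫ ∂γ' ≤ ∫ p, ⟪p.1, p.2⟫ ∂γ :=
  optimality_of_subdifferential_coupling_general m u hu μ ν hμ2 hν2 γ hγ1 hγ2 S hconc hsub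
end
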